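/- Let Q₁ be an (r₁,s₁,t₁)-inverse quasigroup with J₁ such that J₁^{h₁} ∈ Aut(Q₁), and Q₂ an (r₂,s₂,t₂)-inverse quasigroup with J₂ such that J₂^{h₂} ∈ Aut(Q₂). If there exist integers u₁,u₂ with r−r₁ = s−s₁ = t−t₁ = u₁h₁ and r−r₂ = s−s₂ = t−t₂ = u₂h₂, then Q₁ × Q₂ is an (r,s,t)-inverse quasigroup with permutation J₁ × J₂. -/

import Mathlib

/-!
Every power of the automorphism `J ^ h`, in particular `J ^ (u * h)`, is again an automorphism,
and applying it to the identity `J^r(xy) J^s(x) = J^t(y)` shifts all three exponents by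
`u * h`. The conditions on `u₁, u₂` say that these shifts reach the same triple `(r, s, t)` in
both factors, and the inverse property of a direct product holds componentwise.
-/

namespace Equiv.Perm

def HasInverseProperty {Q : Type*} [Mul Q] (J : Perm Q) (r s t : ℤ) : Prop :=
  ∀ x y : Q, (J ^ r) (x * y) * (J ^ s) x = (J ^ t) y

theorem zpow_apply_mul {Q : Type*} [Mul Q] (f : Perm Q)
    (hf : ∀ x y, f (x * y) = f x * f y) (n : ℤ) (x y : Q) :
    (f ^ n) (x * y) = (f ^ n) x * (f ^ n) y := by
  let e : MulAut Q := { f with map_mul' := hf }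
  have he : f ^ n = MulAut.toPerm Q (e ^ n) := by rw [map_zpow]; rfl
  rw [he]
  exact map_mul (e ^ n) x y

def prodCongrHom (α β : Type*) : Perm α × Perm β →* Perm (α × β) where
  toFun e := e.1.prodCongr e.2
  map_one' := rfl
  map_mul' _ _ := rfl

theorem prodCongr_zpow {α β : Type*} (e : Perm α) (f : Perm β) (n : ℤ) :
    e.prodCongr f ^ n = (e ^ n).prodCongr (f ^ n) :=
  (map_zpow (prodCongrHom α β) (e, f) n).symm

theorem HasInverseProperty.of_sub_eq_mul {Q : Type*} [Mul Q] {J : Perm Q} {r s t : ℤ}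
    (hJ : J.HasInverseProperty r s t) {h : ℤ}
    (hh : ∀ x y, (J ^ h) (x * y) = (J ^ h) x * (J ^ h) y)
    {r' s' t' u : ℤ} (hr : r' - r = u * h) (hs : s' - s = u * h) (ht : t' - t = u * h) :
    J.HasInverseProperty r' s' t' := by
  obtain ⟨rfl, rfl, rfl⟩ : r' = u * h + r ∧ s' = u * h + s ∧ t' = u * h + t := by omega
  have hk : ∀ x y, (J ^ (u * h)) (x * y) = (J ^ (u * h)) x * (J ^ (u * h)) y := by
    rw [mul_comm, zpow_mul]
    exact zpow_apply_mul _ hh u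
  intro x y
  simp only [zpow_add, mul_apply, ← hk, hJ x y]

theorem HasInverseProperty.prodCongr {Q₁ Q₂ : Type*} [Mul Q₁] [Mul Q₂] {J₁ : Perm Q₁}
    {J₂ : Perm Q₂} {r s t : ℤ} (h₁ : J₁.HasInverseProperty r s t)
    (h₂ : J₂.HasInverseProperty r s t) : HasInverseProperty (J₁.prodCongr J₂) r s t := by
  intro p q
  simp only [prodCongr_zpow]
  exact Prod.ext (h₁ p.1 q.1) (h₂ p.2 q.2)

end Equiv.Perm

theorem stmt_8_general {Q₁ Q₂ : Type*} [Mul Q₁] [Mul Q₂]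
    (J₁ : Equiv.Perm Q₁) (J₂ : Equiv.Perm Q₂)
    (r₁ s₁ t₁ r₂ s₂ t₂ h₁ h₂ r s t : ℤ)
    (hi₁ : ∀ x y : Q₁, (J₁ ^ r₁) (x * y) * (J₁ ^ s₁) x = (J₁ ^ t₁) y)
    (hi₂ : ∀ x y : Q₂, (J₂ ^ r₂) (x * y) * (J₂ ^ s₂) x = (J₂ ^ t₂) y)
    (ha₁ : ∀ x y : Q₁, (J₁ ^ h₁) (x * y) = (J₁ ^ h₁) x * (J₁ ^ h₁) y)
    (ha₂ : ∀ x y : Q₂, (J₂ ^ h₂) (x * y) = (J₂ ^ h₂) x * (J₂ ^ h₂) y)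
    (hu : ∃ u₁ u₂ : ℤ,
      r - r₁ = u₁ * h₁ ∧ s - s₁ = u₁ * h₁ ∧ t - t₁ = u₁ * h₁ ∧
      r - r₂ = u₂ * h₂ ∧ s - s₂ = u₂ * h₂ ∧ t - t₂ = u₂ * h₂) :
    ∀ p q : Q₁ × Q₂,
      ((J₁.prodCongr J₂) ^ r) (p * q) * ((J₁.prodCongr J₂) ^ s) p =
        ((J₁.prodCongr J₂) ^ t) q := by
  obtain ⟨u₁, u₂, hr₁, hs₁, ht₁, hr₂, hs₂, ht₂⟩ := hu
  exact Equiv.Perm.HasInverseProperty.prodCongr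
    (Equiv.Perm.HasInverseProperty.of_sub_eq_mul hi₁ ha₁ hr₁ hs₁ ht₁)
    (Equiv.Perm.HasInverseProperty.of_sub_eq_mul hi₂ ha₂ hr₂ hs₂ ht₂)

theorem stmt_8 {Q₁ Q₂ : Type*} [Mul Q₁] [Mul Q₂]
    (hq₁₁ : ∀ a b : Q₁, ∃! x : Q₁, a * x = b)
    (hq₁₂ : ∀ a b : Q₁, ∃! y : Q₁, y * a = b)
    (hq₂₁ : ∀ a b : Q₂, ∃! x : Q₂, a * x = b)
    (hq₂₂ : ∀ a b : Q₂, ∃! y : Q₂, y * a = b)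
    (J₁ : Equiv.Perm Q₁) (J₂ : Equiv.Perm Q₂)
    (r₁ s₁ t₁ r₂ s₂ t₂ h₁ h₂ r s t : ℤ)
    (hi₁ : ∀ x y : Q₁, (J₁ ^ r₁) (x * y) * (J₁ ^ s₁) x = (J₁ ^ t₁) y)
    (hi₂ : ∀ x y : Q₂, (J₂ ^ r₂) (x * y) * (J₂ ^ s₂) x = (J₂ ^ t₂) y)
    (ha₁ : ∀ x y : Q₁, (J₁ ^ h₁) (x * y) = (J₁ ^ h₁) x * (J₁ ^ h₁) y)
    (ha₂ : ∀ x y : Q₂, (J₂ ^ h₂) (x * y) = (J₂ ^ h₂) x * (J₂ ^ h₂) y)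
    (hu : ∃ u₁ u₂ : ℤ,
      r - r₁ = u₁ * h₁ ∧ s - s₁ = u₁ * h₁ ∧ t - t₁ = u₁ * h₁ ∧
      r - r₂ = u₂ * h₂ ∧ s - s₂ = u₂ * h₂ ∧ t - t₂ = u₂ * h₂) :
    ∀ p q : Q₁ × Q₂,
      ((J₁.prodCongr J₂) ^ r) (p * q) * ((J₁.prodCongr J₂) ^ s) p =
        ((J₁.prodCongr J₂) ^ t) q :=
  stmt_8_general J₁ J₂ r₁ s₁ t₁ r₂ s₂ t₂ h₁ h₂ r s t hi₁ hi₂ ha₁ ha₂ hu
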